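/- arXiv:2106.08460 — 5 statements merged into one kernel-verified Lean document; each statement's English description precedes it below -/
import Mathlib

section
/- Let $V_1,\ldots,V_{n+1}$ be real numbers and $w_1,\ldots,w_{n+1}$ nonnegative weights with $\sum_{i=1}^{n+1} w_i = 1$. For a finite weighted discrete distribution $\mathcal{F}$ on $\mathbb{R}\cup\{\infty\}$, define the level-$\alpha$ quantile as $Q(\alpha;\mathcal{F}) = \inf\{t : \mathbb{P}_{T\sim\mathcal{F}}(T\le t)\ge\alpha\}$. Then for any $\alpha\in(0,1)$: $V_{n+1} \le Q(\alpha; \sum_{i=1}^n w_i\delta_{V_i} + w_{n+1}\delta_{V_{n+1}})$ if and only if $V_{n+1} \le Q(\alpha; \sum_{i=1}^n w_i\delta_{V_i} + w_{n+1}\delta_{\infty})$, where $\delta_v$ denotes a point mass at $v$ and $\delta_\infty$ a point mass at a value larger than all $V_i$. -/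
open Finset

/-- Level-`α` quantile of the weighted discrete distribution on `EReal`
placing weight `w i` on `V i`: `Q(α;F) = inf {t : F((-∞,t]) ≥ α}`. -/
noncomputable def equantile {m : ℕ} (w : Fin m → ℝ) (V : Fin m → EReal) (α : ℝ) : EReal :=
  sInf {t : EReal | α ≤ ∑ i, if V i ≤ t then w i else 0}

/-- Lemma A.1: replacing the point mass at `V (n+1)` by a point mass at `+∞` does not
change whether `V (n+1)` is below the level-`α` quantile. -/
theorem stmt0 (n : ℕ) (V : Fin (n + 1) → ℝ) (w : Fin (n + 1) → ℝ)
    (hw : ∀ i, 0 ≤ w i) (hsum : ∑ i, w i = 1) (α : ℝ) (hα : α ∈ Set.Ioo (0 : ℝ) 1) :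
    ((V (Fin.last n) : EReal) ≤ equantile w (fun i => (V i : EReal)) α) ↔
      ((V (Fin.last n) : EReal) ≤
        equantile w (fun i => if i = Fin.last n then (⊤ : EReal) else (V i : EReal)) α) := by
  constructor
  · intro h
    refine le_sInf fun t ht => h.trans (sInf_le ?_)
    simp only [Set.mem_setOf_eq] at ht ⊢
    refine ht.trans (Finset.sum_le_sum fun i _ => ?_)
    by_cases hi : i = Fin.last n
    · subst hi
      by_cases htop : (⊤ : EReal) ≤ t
      · have hv : (V (Fin.last n) : EReal) ≤ t := le_top.trans htop
        simp [htop, hv]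
      · simp only [if_pos rfl, if_neg htop]
        split_ifs <;> simp [hw]
    · simp [hi]
  · intro h
    refine le_sInf fun t ht => ?_
    by_contra hlt
    push_neg at hlt
    have ht2 : t ∈ {t : EReal | α ≤ ∑ i,
        if (if i = Fin.last n then (⊤ : EReal) else (V i : EReal)) ≤ t then w i else 0} := by
      simp only [Set.mem_setOf_eq] at ht ⊢
      refine le_of_le_of_eq ht (Finset.sum_congr rfl fun i _ => ?_)
      by_cases hi : i = Fin.last n
      · subst hi
        rw [if_neg (not_le.mpr hlt), if_pos rfl, if_neg]
        intro htop
        exact absurd (top_le_iff.mp htop ▸ hlt) (not_lt.mpr le_top)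
      · simp [hi]
    exact absurd (h.trans (sInf_le ht2)) (not_le.mpr hlt)
end

section
/- Let $V_1,\ldots,V_{n+1}$ be exchangeable real-valued random variables (e.g., i.i.d.), and let $Q(\alpha; \frac{1}{n+1}\sum_{i=1}^{n+1}\delta_{V_i})$ denote the level-$\alpha$ empirical quantile of $V_1,\ldots,V_{n+1}$, defined as $\inf\{t : \frac{1}{n+1}\#\{i : V_i\le t\}\ge\alpha\}$. Then for any integer $k$ with $k\ge \lceil (n+1)\alpha\rceil$, $\mathbb{P}\big(V_{n+1} \le Q(\tfrac{k}{n+1}; \tfrac{1}{n+1}\sum_{i=1}^{n+1}\delta_{V_i})\big) \ge \alpha$. -/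
/-!
The quantile `q(V)` is a symmetric function of `V`, so by exchangeability all events
`{V i ≤ q(V)}` have the same probability `p`. The set whose infimum defines the quantile is a
superlevel set of an upper semicontinuous step function, hence closed, so the infimum is attained
whenever the set is nonempty (and is `⊤` otherwise). Hence for every outcome at least a fraction
`min (k/(n+1)) 1 ≥ α` of the `V i` lie below `q(V)`, and averaging over `i` gives `p ≥ α`.
-/

open Finset MeasureTheory

section Quantile

variable {m : ℕ} {w : Fin m → ℝ}

lemma upperSemicontinuous_sum_ite_le (hw : 0 ≤ w) (V : Fin m → EReal) :
    UpperSemicontinuous fun t : EReal => ∑ i, if V i ≤ t then w i else 0 := by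
  refine upperSemicontinuous_sum fun i _ => ?_
  have h : (fun t => if V i ≤ t then w i else 0) = (Set.Ici (V i)).indicator fun _ => w i := by
    ext t
    simp only [Set.indicator_apply, Set.mem_Ici]
  exact h ▸ isClosed_Ici.upperSemicontinuous_indicator (hw i)

lemma min_le_sum_ite_le_equantile (hw : 0 ≤ w) (V : Fin m → EReal) (α : ℝ) :
    min α (∑ i, w i) ≤ ∑ i, if V i ≤ equantile w V α then w i else 0 := by
  set S := {t : EReal | α ≤ ∑ i, if V i ≤ t then w i else 0}
  rcases S.eq_empty_or_nonempty with hS | hS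
  · simp [equantile, S, hS]
  · have hclosed : IsClosed S := (upperSemicontinuous_sum_ite_le hw V).isClosed_preimage α
    exact min_le_of_left_le (hclosed.sInf_mem hS)

lemma equantile_eq_iInf_iSup (hw : 0 ≤ w) (V : Fin m → EReal) (α : ℝ) :
    equantile w V α = ⨅ (J : Finset (Fin m)) (_ : α ≤ ∑ i ∈ J, w i), ⨆ i ∈ J, V i := by
  refine le_antisymm (le_iInf₂ fun J hJ => sInf_le ?_) (le_sInf fun t ht => ?_)
  · refine hJ.trans ?_
    rw [← sum_filter]
    exact sum_le_sum_of_subset_of_nonneg (fun i hi => by simpa using le_biSup V hi)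
      fun i _ _ => hw i
  · refine iInf₂_le_of_le {i | V i ≤ t}.toFinset ?_ (iSup₂_le fun i hi => by simpa using hi)
    simpa [sum_filter] using ht

lemma equantile_comp_perm (w : Fin m → ℝ) (V : Fin m → EReal) (σ : Equiv.Perm (Fin m))
    (α : ℝ) : equantile (w ∘ σ) (V ∘ σ) α = equantile w V α := by
  simp only [equantile, Function.comp_apply]
  congr! 4 with t
  exact Equiv.sum_comp σ fun i => if V i ≤ t then w i else 0

lemma measurable_equantile (hw : 0 ≤ w) (α : ℝ) :
    Measurable fun x : Fin m → ℝ => equantile w (fun i => (x i : EReal)) α := by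
  simp_rw [equantile_eq_iInf_iSup hw]
  exact Measurable.iInf fun J => Measurable.iInf fun _ => Measurable.iSup fun i =>
    Measurable.iSup fun _ => measurable_coe_real_ereal.comp (measurable_pi_apply i)

end Quantile

section Exchangeable

variable {ι Ω : Type*} [MeasurableSpace Ω] {μ : Measure Ω}

lemma measure_le_comp_eq_of_exchangeable [DecidableEq ι] {V : ι → Ω → ℝ}
    (hV : ∀ i, Measurable (V i))
    (hexch : ∀ σ : Equiv.Perm ι,
      Measure.map (fun ω i => V (σ i) ω) μ = Measure.map (fun ω i => V i ω) μ)
    {q : (ι → ℝ) → EReal} (hq : Measurable q) (hperm : ∀ (σ : Equiv.Perm ι) x, q (x ∘ σ) = q x)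
    (i j : ι) :
    μ {ω | (V i ω : EReal) ≤ q fun l => V l ω} = μ {ω | (V j ω : EReal) ≤ q fun l => V l ω} := by
  set σ := Equiv.swap i j
  set B := {x : ι → ℝ | (x j : EReal) ≤ q x}
  have hB : MeasurableSet B :=
    measurableSet_le (measurable_coe_real_ereal.comp (measurable_pi_apply j)) hq
  have hVσ : {ω | (V i ω : EReal) ≤ q fun l => V l ω} = (fun ω l => V (σ l) ω) ⁻¹' B := by
    ext ω
    have := hperm σ fun l => V l ω
    simp_all [B, σ, Function.comp_def]
  rw [hVσ, ← Measure.map_apply (measurable_pi_lambda _ fun l => hV _) hB, hexch σ,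
    Measure.map_apply (measurable_pi_lambda _ hV) hB]
  rfl

lemma le_card_mul_measureReal_of_le_sum_indicator [Fintype ι] [IsProbabilityMeasure μ]
    {A : ι → Set Ω} (hA : ∀ i, MeasurableSet (A i)) {j : ι} (heq : ∀ i, μ (A i) = μ (A j))
    {c r : ℝ} (hr : ∀ ω, r ≤ ∑ i, (A i).indicator (fun _ => c) ω) :
    r ≤ Fintype.card ι * c * μ.real (A j) :=
  calc r = ∫ _, r ∂μ := by simp
    _ ≤ ∫ ω, ∑ i, (A i).indicator (fun _ => c) ω ∂μ :=
        integral_mono (integrable_const r)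
          (integrable_finsetSum _ fun i _ => (integrable_const c).indicator (hA i)) hr
    _ = ∑ i, μ.real (A i) * c := by
        rw [integral_finsetSum _ fun i _ => (integrable_const c).indicator (hA i)]
        simp_rw [integral_indicator_const c (hA _), smul_eq_mul]
    _ = Fintype.card ι * c * μ.real (A j) := by
        simp only [measureReal_def, heq, sum_const, card_univ, nsmul_eq_mul]
        ring

end Exchangeable

/-- Conformal prediction marginal coverage: for exchangeable `V₁,…,V_{n+1}` and any integer
`k ≥ ⌈(n+1)α⌉`, the probability that `V_{n+1}` is at most the level-`k/(n+1)` empirical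
quantile of all `n+1` values is at least `α`. -/
theorem stmt1 (n : ℕ) {Ω : Type*} [MeasurableSpace Ω] (μ : Measure Ω) [IsProbabilityMeasure μ]
    (V : Fin (n + 1) → Ω → ℝ) (hmeas : ∀ i, Measurable (V i))
    (hexch : ∀ σ : Equiv.Perm (Fin (n + 1)),
      Measure.map (fun ω i => V (σ i) ω) μ = Measure.map (fun ω i => V i ω) μ)
    (α : ℝ) (hα : α ∈ Set.Ioo (0 : ℝ) 1) (k : ℕ) (hk : ((n : ℝ) + 1) * α ≤ k) :
    ENNReal.ofReal α ≤
      μ {ω | (V (Fin.last n) ω : EReal) ≤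
        equantile (fun _ : Fin (n + 1) => 1 / ((n : ℝ) + 1))
          (fun i => (V i ω : EReal)) ((k : ℝ) / ((n : ℝ) + 1))} := by
  set w : Fin (n + 1) → ℝ := fun _ => 1 / ((n : ℝ) + 1)
  have hw : 0 ≤ w := fun _ => by positivity
  set q : (Fin (n + 1) → ℝ) → EReal := fun x => equantile w (fun i => (x i : EReal)) (k / (n + 1))
  set A : Fin (n + 1) → Set Ω := fun i => {ω | (V i ω : EReal) ≤ q fun l => V l ω}
  have hq : Measurable q := measurable_equantile hw _
  have hA : ∀ i, MeasurableSet (A i) := fun i => measurableSet_le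
    (measurable_coe_real_ereal.comp (hmeas i)) (hq.comp (measurable_pi_lambda _ hmeas))
  have hperm : ∀ (σ : Equiv.Perm (Fin (n + 1))) x, q (x ∘ σ) = q x := fun σ x =>
    equantile_comp_perm w (fun i => (x i : EReal)) σ _
  have hαk : α ≤ k / (n + 1) := by rw [le_div_iff₀ (by positivity)]; linarith
  have hcover : ∀ ω, α ≤ ∑ i, (A i).indicator (fun _ => 1 / ((n : ℝ) + 1)) ω := by
    intro ω
    have h := min_le_sum_ite_le_equantile hw (fun i => (V i ω : EReal)) (k / (n + 1))
    have hw1 : ∑ i, w i = 1 := by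
      simp only [w, sum_const, card_univ, Fintype.card_fin, nsmul_eq_mul, Nat.cast_succ]
      field_simp
    rw [hw1] at h
    simpa [Set.indicator_apply, A, q, w] using (le_min hαk hα.2.le).trans h
  have hlast := le_card_mul_measureReal_of_le_sum_indicator hA
    (fun i => measure_le_comp_eq_of_exchangeable hmeas hexch hq hperm i (Fin.last n)) hcover
  rw [Fintype.card_fin, Nat.cast_succ, mul_one_div_cancel (by positivity), one_mul] at hlast
  exact ENNReal.ofReal_le_of_le_toReal hlast
end

section
/- Let $n_0$ be a Binomial$(m,\alpha)$ random variable with $\alpha\in(0,1)$, and set $n_1 = m - n_0$. Then $\mathbb{E}\Big[\Big[\frac{\alpha}{1-\alpha}-\frac{n_0}{n_1+1}\Big]_+\Big] = \frac{\alpha}{1-\alpha}\,\mathbb{P}\big(n_0 = \lfloor \alpha(m+1)\rfloor\big),$ where $[x]_+ = \max(x,0)$. -/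
/-!
With `c = α/(1-α)` and `p k = P(n₀ = k)`, the ratio of consecutive binomial weights gives
`k/(m-k+1) · p k = c · p (k-1)`, so `(c - k/(m-k+1)) · p k = c · p k - c · p (k-1)` and partial
sums of the unclipped terms telescope to `c · p n`. The term `c - k/(m-k+1)` is nonnegative exactly
when `k ≤ α(m+1)`, i.e. for `k ≤ ⌊α(m+1)⌋`, so the positive part only truncates the sum there.
-/

open Finset

noncomputable def binomialWeight (m : ℕ) (α : ℝ) (k : ℕ) : ℝ :=
  (m.choose k : ℝ) * α ^ k * (1 - α) ^ (m - k)

lemma succ_div_mul_binomialWeight_succ {m j : ℕ} {α : ℝ} (hα : α ≠ 1) (hj : j < m) :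
    ((j : ℝ) + 1) / ((m : ℝ) - ((j : ℝ) + 1) + 1) * binomialWeight m α (j + 1)
      = α / (1 - α) * binomialWeight m α j := by
  have hchoose : (m.choose (j + 1) : ℝ) * ((j : ℝ) + 1) = (m.choose j : ℝ) * ((m : ℝ) - j) := by
    have h := congrArg (Nat.cast (R := ℝ)) (Nat.choose_succ_right_eq m j)
    push_cast [Nat.cast_sub hj.le] at h
    exact h
  have hmj : (m : ℝ) - j ≠ 0 := sub_ne_zero.2 (by exact_mod_cast hj.ne')
  have h1α : 1 - α ≠ 0 := sub_ne_zero.2 hα.symm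
  unfold binomialWeight
  rw [show m - j = m - (j + 1) + 1 by omega, pow_succ, pow_succ,
    show (m : ℝ) - ((j : ℝ) + 1) + 1 = m - j by ring]
  field_simp
  linear_combination α ^ j * α * hchoose

lemma sum_range_sub_div_mul_binomialWeight {m n : ℕ} {α : ℝ} (hα : α ≠ 1) (hn : n ≤ m) :
    ∑ k ∈ range (n + 1), (α / (1 - α) - (k : ℝ) / ((m : ℝ) - k + 1)) * binomialWeight m α k
      = α / (1 - α) * binomialWeight m α n := by
  induction n with
  | zero => simp
  | succ j ih =>
    rw [sum_range_succ, ih (by omega), sub_mul, Nat.cast_succ,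
      succ_div_mul_binomialWeight_succ hα hn]
    ring

lemma div_le_div_one_sub_iff_le_mul {m x α : ℝ} (hα : α < 1) (hx : x < m + 1) :
    x / (m - x + 1) ≤ α / (1 - α) ↔ x ≤ α * (m + 1) := by
  rw [div_le_div_iff₀ (by linarith) (by linarith)]
  constructor <;> intro h <;> nlinarith

theorem stmt7_general (m : ℕ) (α : ℝ) (hα : α ∈ Set.Ioo (0 : ℝ) 1) :
    (∑ k ∈ Finset.range (m + 1),
        max (α / (1 - α) - (k : ℝ) / (((m : ℝ) - k) + 1)) 0 *
          ((Nat.choose m k : ℝ) * α ^ k * (1 - α) ^ (m - k)))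
      = (α / (1 - α)) *
        ((Nat.choose m ⌊α * ((m : ℝ) + 1)⌋₊ : ℝ) * α ^ ⌊α * ((m : ℝ) + 1)⌋₊ *
          (1 - α) ^ (m - ⌊α * ((m : ℝ) + 1)⌋₊)) := by
  obtain ⟨hα0, hα1⟩ := hα
  set N := ⌊α * ((m : ℝ) + 1)⌋₊
  have hprod_nonneg : 0 ≤ α * ((m : ℝ) + 1) := by positivity
  have hNm : N ≤ m := Nat.lt_succ_iff.1 <| (Nat.floor_lt hprod_nonneg).2 <| by
    push_cast; nlinarith
  have hterm_sign (k : ℕ) (hk : k ≤ m) :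
      0 ≤ α / (1 - α) - (k : ℝ) / ((m : ℝ) - k + 1) ↔ k ≤ N := by
    rw [sub_nonneg, div_le_div_one_sub_iff_le_mul hα1 (by exact_mod_cast Nat.lt_succ_of_le hk),
      Nat.le_floor_iff hprod_nonneg]
  change ∑ k ∈ range (m + 1), max _ 0 * binomialWeight m α k = α / (1 - α) * binomialWeight m α N
  rw [← sum_range_add_sum_Ico _ (by omega : N + 1 ≤ m + 1),
    ← sum_range_sub_div_mul_binomialWeight hα1.ne hNm, sum_eq_zero (s := Ico _ _), add_zero]
  · refine sum_congr rfl fun k hk => ?_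
    have hkN : k ≤ N := Nat.lt_succ_iff.1 (mem_range.1 hk)
    rw [max_eq_left ((hterm_sign k (hkN.trans hNm)).2 hkN)]
  · intro k hk
    obtain ⟨hNk, hkm⟩ := mem_Ico.1 hk
    rw [max_eq_right (le_of_not_ge (mt (hterm_sign k (by omega)).1 (by omega))), zero_mul]

/-- For `n₀ ~ Binomial(m, α)` and `n₁ = m - n₀`, assuming `α(m+1)` is not an integer,
`E[[α/(1-α) - n₀/(n₁+1)]₊] = (α/(1-α)) ⬝ P(n₀ = ⌊α(m+1)⌋)`. -/
theorem stmt7 (m : ℕ) (α : ℝ) (hα : α ∈ Set.Ioo (0 : ℝ) 1)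
    (hnotint : ∀ z : ℤ, α * ((m : ℝ) + 1) ≠ (z : ℝ)) :
    (∑ k ∈ Finset.range (m + 1),
        max (α / (1 - α) - (k : ℝ) / (((m : ℝ) - k) + 1)) 0 *
          ((Nat.choose m k : ℝ) * α ^ k * (1 - α) ^ (m - k)))
      = (α / (1 - α)) *
        ((Nat.choose m ⌊α * ((m : ℝ) + 1)⌋₊ : ℝ) * α ^ ⌊α * ((m : ℝ) + 1)⌋₊ *
          (1 - α) ^ (m - ⌊α * ((m : ℝ) + 1)⌋₊)) :=
  stmt7_general m α hα
end

section
/- Let $V_1,\ldots,V_n$ be real numbers, $v\in\mathbb{R}$, and let $p_1,\ldots,p_{n+1}$ be nonnegative weights summing to $1$. Suppose $v > Q(\alpha; \sum_{i=1}^n p_i\delta_{V_i} + p_{n+1}\delta_v)$ for some $\alpha\in(0,1)$, and let $V_{i^*} = Q(\alpha;\sum_{i=1}^n p_i\delta_{V_i}+p_{n+1}\delta_v)$ with $V_{i^*}<\infty$. Then $Q(\alpha; \sum_{i=1}^n p_i\delta_{V_i} + p_{n+1}\delta_\infty) \le V_{i^*} < v$, i.e., also $v > Q(\alpha;\sum_{i=1}^n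 p_i\delta_{V_i}+p_{n+1}\delta_\infty)$. -/
open Finset

/-- One direction of Lemma A.1: if `v` strictly exceeds the quantile of the distribution
with point mass `p_{n+1}` at `v`, attained at a finite atom `V i*`, then the quantile of
the distribution with the point mass moved to `+∞` is still at most `V i* < v`. -/
theorem stmt9 (n : ℕ) (V : Fin n → ℝ) (v : ℝ) (p : Fin (n + 1) → ℝ)
    (hp : ∀ i, 0 ≤ p i) (hsum : ∑ i, p i = 1)
    (α : ℝ) (hα : α ∈ Set.Ioo (0 : ℝ) 1) (istar : Fin n)
    (hq : equantile p (Fin.snoc (fun i : Fin n => ((V i : ℝ) : EReal)) (v : EReal)) α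
        = ((V istar : ℝ) : EReal))
    (hv : V istar < v) :
    equantile p (Fin.snoc (fun i : Fin n => ((V i : ℝ) : EReal)) (⊤ : EReal)) α
        ≤ ((V istar : ℝ) : EReal) ∧
    ((V istar : ℝ) : EReal) < ((v : ℝ) : EReal) := by
  refine ⟨?_, by exact_mod_cast hv⟩
  set W : Fin (n+1) → EReal := Fin.snoc (fun i : Fin n => ((V i : ℝ) : EReal)) (v : EReal)
    with hW
  set Wt : Fin (n+1) → EReal := Fin.snoc (fun i : Fin n => ((V i : ℝ) : EReal)) (⊤ : EReal)
    with hWt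
  -- choose a real r with V istar < r and no atoms in (V istar, r]
  set A : Finset ℝ := insert v ((Finset.univ.image V).filter (fun x => V istar < x)) with hA
  have hAne : A.Nonempty := ⟨v, Finset.mem_insert_self _ _⟩
  set m := A.min' hAne with hm
  have hmgt : V istar < m := by
    rw [hm, Finset.lt_min'_iff]
    intro b hb
    rcases Finset.mem_insert.mp hb with h | h
    · subst h; exact hv
    · exact (Finset.mem_filter.mp h).2
  set r : ℝ := (V istar + m) / 2 with hr
  have hr1 : V istar < r := by rw [hr]; linarith
  have hr2 : r < m := by rw [hr]; linarith
  have hmv : m ≤ v := Finset.min'_le _ _ (Finset.mem_insert_self _ _)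
  have hkey : ∀ j : Fin n, (V j ≤ r ↔ V j ≤ V istar) := by
    intro j
    constructor
    · intro h
      by_contra hc
      push_neg at hc
      have : V j ∈ A := Finset.mem_insert_of_mem
        (Finset.mem_filter.mpr ⟨Finset.mem_image_of_mem V (Finset.mem_univ j), hc⟩)
      have := Finset.min'_le _ _ this
      linarith
    · intro h; linarith
  -- monotone sum
  have mono : ∀ (f : Fin (n+1) → EReal) (s t : EReal), s ≤ t →
      (∑ i, if f i ≤ s then p i else 0) ≤ ∑ i, if f i ≤ t then p i else 0 := by
    intro f s t hst
    apply Finset.sum_le_sum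
    intro i _
    split_ifs with h1 h2
    · exact le_rfl
    · exact absurd (h1.trans hst) h2
    · exact hp i
    · exact le_rfl
  have hlt : equantile p W α < ((r : ℝ) : EReal) := by
    rw [hq]; exact_mod_cast hr1
  obtain ⟨s, hsmem, hslt⟩ := sInf_lt_iff.mp hlt
  have hαr : α ≤ ∑ i, if W i ≤ ((r : ℝ) : EReal) then p i else 0 :=
    le_trans hsmem (mono W s _ hslt.le)
  have hsumeq : (∑ i, if W i ≤ ((r : ℝ) : EReal) then p i else 0)
      = ∑ i, if Wt i ≤ ((V istar : ℝ) : EReal) then p i else 0 := by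
    apply Finset.sum_congr rfl
    intro i _
    induction i using Fin.lastCases with
    | last =>
      have h1 : W (Fin.last n) = ((v : ℝ) : EReal) := by rw [hW]; simp [Fin.snoc_last]
      have h2 : Wt (Fin.last n) = (⊤ : EReal) := by rw [hWt]; simp [Fin.snoc_last]
      rw [h1, h2]
      have hv1 : ¬ ((v : ℝ) : EReal) ≤ ((r : ℝ) : EReal) := by
        rw [EReal.coe_le_coe_iff]; push_neg; linarith
      have hv2 : ¬ (⊤ : EReal) ≤ ((V istar : ℝ) : EReal) := by
        simp [top_le_iff]
      rw [if_neg hv1, if_neg hv2]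
    | cast j =>
      have h1 : W (Fin.castSucc j) = ((V j : ℝ) : EReal) := by rw [hW]; simp [Fin.snoc_castSucc]
      have h2 : Wt (Fin.castSucc j) = ((V j : ℝ) : EReal) := by rw [hWt]; simp [Fin.snoc_castSucc]
      rw [h1, h2]
      simp only [EReal.coe_le_coe_iff]
      by_cases h : V j ≤ V istar
      · rw [if_pos ((hkey j).mpr h), if_pos h]
      · rw [if_neg (fun hh => h ((hkey j).mp hh)), if_neg h]
  exact sInf_le (by rw [Set.mem_setOf_eq, ← hsumeq]; exact hαr)
end

section
/- Let $n_0, n_1 \ge 0$ be integers, $\alpha\in(0,1)$, and suppose $\alpha > \frac{n_0}{n_0+n_1+1}$. Let $V_1,\ldots,V_{n_1}$ be i.i.d. continuous random variables and $V_{n_1+1},\ldots,V_{n_1+n_0}$ all equal to $0$ with $V_i > 0$ almost surely for $i\le n_1$, and let $V_{new}$ be another independent copy of the continuous distribution of $V_1$. Then $\mathbb{P}\Big(V_{new} \le Q\big(\alpha; \tfrac{1}{n_0+n_1+1}(\sum_{i=1}^{n_0+n_1}\delta_{V_i} + \delta_\infty)\big)\Big) = \frac{\lceil (n_0+n_1+1)\alpha\rceil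 - n_0}{n_1+1} \le \frac{1}{n_1+1} + \frac{n_0+n_1+1}{n_1+1}\Big(\alpha - \frac{n_0}{n_0+n_1+1}\Big).$ -/
open Finset MeasureTheory ProbabilityTheory
open scoped ENNReal

theorem le_sInf_card_le_iff {ι α : Type*} [Fintype ι] [CompleteLinearOrder α] (V : ι → α)
    {m : ℕ} (hm : 0 < m) (x : α) :
    x ≤ sInf {t | m ≤ #{j | V j ≤ t}} ↔ #{j | V j < x} < m := by
  constructor
  · intro hx
    by_contra! hcard
    have hne : ({j | V j < x} : Finset ι).Nonempty := card_pos.mp (hm.trans_le hcard)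
    have hmax : ({j | V j < x} : Finset ι).sup' hne V < x :=
      (sup'_lt_iff hne).mpr fun j hj => (mem_filter.mp hj).2
    refine hmax.not_ge (hx.trans (sInf_le (hcard.trans (card_le_card fun j hj => ?_))))
    exact mem_filter.mpr ⟨mem_univ j, le_sup' V hj⟩
  · intro hcard
    refine le_sInf fun t ht => le_of_not_gt fun htx => (hcard.trans_le ht).not_ge ?_
    exact card_le_card (monotone_filter_right _ fun j _ hj => hj.trans_lt htx)

theorem equantile_const_eq_sInf {m : ℕ} (V : Fin m → EReal) {N : ℝ} (hN : 0 < N) (α : ℝ) :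
    equantile (fun _ => 1 / N) V α = sInf {t | ⌈N * α⌉₊ ≤ #{j | V j ≤ t}} := by
  unfold equantile
  congr 1
  ext t
  rw [Set.mem_ofPred_eq, Set.mem_ofPred_eq, ← sum_filter, sum_const, nsmul_eq_mul, mul_one_div,
    le_div_iff₀ hN, Nat.ceil_le, mul_comm]

/-- The scores `V_1, …, V_{n₁}, 0, …, 0, +∞`; the last coordinate of `u` is `V_new`. -/
noncomputable def mixedScores (n0 n1 : ℕ) (u : Fin (n1 + 1) → ℝ) (j : Fin (n1 + n0 + 1)) :
    EReal :=
  if hj : (j : ℕ) < n1 then ((u (Fin.castSucc ⟨j, hj⟩) : ℝ) : EReal)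
  else if (j : ℕ) < n1 + n0 then ((0 : ℝ) : EReal) else ⊤

theorem card_mixedScores_lt (n0 n1 : ℕ) (u : Fin (n1 + 1) → ℝ) {x : ℝ} (hx : 0 < x) :
    #{j | mixedScores n0 n1 u j < x} = n0 + #{i : Fin n1 | u i.castSucc < x} := by
  have hzero (i : Fin n0) : n1 + (i : ℕ) < n0 + n1 := by omega
  rw [card_filter, card_filter, Fin.sum_univ_castSucc, Fin.sum_univ_add]
  simp [mixedScores, hzero, hx, add_comm]

noncomputable def countBelow {ι : Type*} [Fintype ι] (u : ι → ℝ) (j : ι) : ℕ :=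
  #{i | u i < u j}

section CountBelow

variable {ι : Type*} [Fintype ι]

theorem measurable_countBelow (j : ι) : Measurable fun u : ι → ℝ => countBelow u j := by
  simp only [countBelow, card_filter]
  exact Finset.measurable_sum _ fun i _ => Measurable.ite
    (measurableSet_lt (measurable_pi_apply i) (measurable_pi_apply j)) measurable_const
    measurable_const

theorem countBelow_lt_card (u : ι → ℝ) (j : ι) : countBelow u j < Fintype.card ι :=
  card_lt_univ_of_notMem (s := {i | u i < u j}) (x := j) (by simp)

theorem countBelow_lt_countBelow {u : ι → ℝ} {i j : ι} (h : u i < u j) :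
    countBelow u i < countBelow u j :=
  card_lt_card ⟨monotone_filter_right _ fun _ _ hk => hk.trans h,
    fun hsub => lt_irrefl (u i) (mem_filter.mp (hsub (mem_filter.mpr ⟨mem_univ i, h⟩))).2⟩

theorem countBelow_injective {u : ι → ℝ} (hu : Function.Injective u) :
    Function.Injective (countBelow u) := by
  intro i j hij
  by_contra hne
  rcases (hu.ne hne).lt_or_gt with h | h
  · exact (countBelow_lt_countBelow h).ne hij
  · exact (countBelow_lt_countBelow h).ne hij.symm

theorem existsUnique_countBelow_eq {u : ι → ℝ} (hu : Function.Injective u) {r : ℕ}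
    (hr : r < Fintype.card ι) : ∃! j, countBelow u j = r := by
  let f : ι → Fin (Fintype.card ι) := fun j => ⟨countBelow u j, countBelow_lt_card u j⟩
  have hf : Function.Bijective f := (Fintype.bijective_iff_injective_and_card f).mpr
    ⟨fun i j h => countBelow_injective hu (congrArg Fin.val h), (Fintype.card_fin _).symm⟩
  obtain ⟨j, hj⟩ := hf.existsUnique ⟨r, hr⟩
  exact ⟨j, congrArg Fin.val hj.1, fun i hi => hj.2 i (Fin.ext hi)⟩

theorem countBelow_comp_perm (u : ι → ℝ) (σ : Equiv.Perm ι) (j : ι) :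
    countBelow (u ∘ σ) j = countBelow u (σ j) :=
  card_bij (fun i _ => σ i) (fun i hi => by simpa using hi) (fun _ _ _ _ h => σ.injective h)
    fun i hi => ⟨σ.symm i, by simpa using hi, σ.apply_symm_apply i⟩

theorem countBelow_last {n : ℕ} (u : Fin (n + 1) → ℝ) :
    countBelow u (Fin.last n) = #{i : Fin n | u i.castSucc < u (Fin.last n)} := by
  rw [countBelow, card_filter, card_filter, Fin.sum_univ_castSucc]
  simp

end CountBelow

section Exchangeable

variable {ι : Type*} [Fintype ι] [DecidableEq ι] (P : Measure (ι → ℝ)) [IsProbabilityMeasure P]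

theorem measure_countBelow_eq_inv
    (hexch : ∀ σ : Equiv.Perm ι, MeasurePreserving (· ∘ σ) P P)
    (hinj : ∀ᵐ u ∂P, Function.Injective u) (j : ι) {r : ℕ}
    (hr : r < Fintype.card ι) :
    P {u | countBelow u j = r} = (Fintype.card ι : ℝ≥0∞)⁻¹ := by
  set A : ι → Set (ι → ℝ) := fun i => {u | countBelow u i = r}
  have hA (i : ι) : MeasurableSet (A i) := measurable_countBelow i (measurableSet_singleton r)
  have hsame (i : ι) : P (A i) = P (A j) := by
    have hpre : (· ∘ Equiv.swap i j) ⁻¹' A i = A j := by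
      ext u
      simp [A, countBelow_comp_perm]
    rw [← hpre, (hexch _).measure_preimage (hA i).nullMeasurableSet]
  have hdisj : Pairwise fun a b => AEDisjoint P (A a) (A b) := fun a b hab =>
    measure_mono_null (t := {u | ¬Function.Injective u}) (fun u ⟨ha, hb⟩ hu =>
      hab ((existsUnique_countBelow_eq hu hr).unique ha hb)) (ae_iff.mp hinj)
  have hcover : P (⋃ i, A i) = 1 := by
    rw [← prob_compl_eq_zero_iff (MeasurableSet.iUnion hA)]
    refine measure_mono_null (t := {u | ¬Function.Injective u}) (fun u hu hinju => hu ?_)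
      (ae_iff.mp hinj)
    obtain ⟨i, hi, -⟩ := existsUnique_countBelow_eq hinju hr
    exact Set.mem_iUnion.mpr ⟨i, hi⟩
  rw [measure_iUnion₀ hdisj fun i => (hA i).nullMeasurableSet, tsum_fintype,
    sum_congr rfl fun i _ => hsame i, sum_const, card_univ, nsmul_eq_mul] at hcover
  exact ENNReal.eq_inv_of_mul_eq_one_left (by rwa [mul_comm])

theorem measure_countBelow_lt
    (hexch : ∀ σ : Equiv.Perm ι, MeasurePreserving (· ∘ σ) P P)
    (hinj : ∀ᵐ u ∂P, Function.Injective u) (j : ι) {k : ℕ}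
    (hk : k ≤ Fintype.card ι) :
    P {u | countBelow u j < k} = k / Fintype.card ι := by
  have hunion : {u : ι → ℝ | countBelow u j < k} = ⋃ r ∈ range k, {u | countBelow u j = r} := by
    ext u
    simp
  rw [hunion, measure_biUnion_finset (f := fun r => {u | countBelow u j = r})
      (fun a _ b _ hab => Set.disjoint_left.mpr fun u ha hb => hab (ha.symm.trans hb))
      fun r _ => measurable_countBelow j (measurableSet_singleton r),
    sum_congr rfl fun r hr => measure_countBelow_eq_inv P hexch hinj j
      ((mem_range.mp hr).trans_le hk), sum_const, card_range, nsmul_eq_mul, div_eq_mul_inv]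

end Exchangeable

section Pi

variable {ι : Type*} [Fintype ι] (ν : Measure ℝ)

theorem measurePreserving_pi_comp_perm [SigmaFinite ν] (σ : Equiv.Perm ι) :
    MeasurePreserving (· ∘ σ) (Measure.pi fun _ : ι => ν) (Measure.pi fun _ : ι => ν) := by
  convert measurePreserving_piCongrLeft (fun _ : ι => ν) σ.symm using 1
  ext u i
  simp [MeasurableEquiv.coe_piCongrLeft, Equiv.piCongrLeft_apply]

theorem pi_setOf_eq_eq_zero [IsProbabilityMeasure ν] (hν : ∀ x, ν {x} = 0) {i j : ι}
    (hij : i ≠ j) :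
    Measure.pi (fun _ : ι => ν) {u | u i = u j} = 0 := by
  have hindep : IndepFun (Function.eval i) (Function.eval j) (Measure.pi fun _ : ι => ν) :=
    (iIndepFun_pi (μ := fun _ => ν) (X := fun _ => id) fun _ => aemeasurable_id).indepFun hij
  have hdiag : MeasurableSet {p : ℝ × ℝ | p.1 = p.2} :=
    measurableSet_eq_fun measurable_fst measurable_snd
  rw [show {u : ι → ℝ | u i = u j} = (fun u => (u i, u j)) ⁻¹' {p | p.1 = p.2} from rfl,
    ← Measure.map_apply ((measurable_pi_apply i).prodMk (measurable_pi_apply j)) hdiag,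
    (indepFun_iff_map_prod_eq_prod_map_map (measurable_pi_apply i).aemeasurable
      (measurable_pi_apply j).aemeasurable).mp hindep,
    (measurePreserving_eval _ i).map_eq, (measurePreserving_eval _ j).map_eq,
    Measure.prod_apply hdiag]
  simp [hν]

theorem ae_injective_pi [IsProbabilityMeasure ν] (hν : ∀ x, ν {x} = 0) :
    ∀ᵐ u ∂Measure.pi (fun _ : ι => ν), Function.Injective u := by
  have hcoord (i j : ι) : ∀ᵐ u ∂Measure.pi (fun _ : ι => ν), u i = u j → i = j := by
    by_cases hij : i = j
    · exact Filter.Eventually.of_forall fun _ _ => hij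
    · exact ae_iff.mpr (measure_mono_null (fun u hu => (Classical.not_imp.mp hu).1)
        (pi_setOf_eq_eq_zero ν hν hij))
  simpa [Function.Injective, ae_all_iff] using hcoord

end Pi

theorem coe_le_equantile_mixedScores_iff (n0 n1 : ℕ) (u : Fin (n1 + 1) → ℝ)
    (hu : 0 < u (Fin.last n1)) {α : ℝ} (hα : 0 < α) :
    (u (Fin.last n1) : EReal) ≤
        equantile (fun _ => 1 / ((n0 : ℝ) + n1 + 1)) (mixedScores n0 n1 u) α ↔
      n0 + countBelow u (Fin.last n1) < ⌈((n0 : ℝ) + n1 + 1) * α⌉₊ := by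
  rw [equantile_const_eq_sInf _ (by positivity), le_sInf_card_le_iff _ (by positivity),
    card_mixedScores_lt n0 n1 u hu, countBelow_last]

theorem natCeil_mul_mem_Ioc {n0 n1 : ℕ} {α : ℝ} (hα1 : α < 1)
    (hαlb : (n0 : ℝ) / ((n0 : ℝ) + n1 + 1) < α) :
    ⌈((n0 : ℝ) + n1 + 1) * α⌉₊ ∈ Set.Ioc n0 (n0 + n1 + 1) := by
  rw [div_lt_iff₀ (by positivity)] at hαlb
  refine ⟨Nat.lt_ceil.mpr (by linarith), Nat.ceil_le.mpr ?_⟩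
  push_cast
  nlinarith

theorem intCeil_sub_div_le (n0 n1 : ℕ) (α : ℝ) :
    ((⌈((n0 : ℝ) + n1 + 1) * α⌉ : ℤ) - (n0 : ℝ)) / ((n1 : ℝ) + 1) ≤
      1 / ((n1 : ℝ) + 1) +
        (((n0 : ℝ) + n1 + 1) / ((n1 : ℝ) + 1)) * (α - (n0 : ℝ) / ((n0 : ℝ) + n1 + 1)) := by
  have hrhs : 1 / ((n1 : ℝ) + 1) +
      (((n0 : ℝ) + n1 + 1) / ((n1 : ℝ) + 1)) * (α - (n0 : ℝ) / ((n0 : ℝ) + n1 + 1)) =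
      (((n0 : ℝ) + n1 + 1) * α + 1 - n0) / ((n1 : ℝ) + 1) := by
    field_simp
    ring
  rw [hrhs]
  gcongr
  linarith [Int.ceil_lt_add_one (((n0 : ℝ) + n1 + 1) * α)]

/-- Conditional coverage computation of Proposition 2: with `n₁` i.i.d. positive continuous
scores, `n₀` scores equal to `0`, and a point mass at `+∞`, an independent copy `V_new` is
covered by the level-`α` quantile with probability exactly
`(⌈(n₀+n₁+1)α⌉ - n₀)/(n₁+1)`, which is at most
`1/(n₁+1) + ((n₀+n₁+1)/(n₁+1))(α - n₀/(n₀+n₁+1))`. -/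
theorem stmt14 {Ω : Type*} [MeasurableSpace Ω] (μ : Measure Ω)
    (n0 n1 : ℕ) (α : ℝ) (hα : α ∈ Set.Ioo (0 : ℝ) 1)
    (hαlb : (n0 : ℝ) / ((n0 : ℝ) + n1 + 1) < α)
    (ν : Measure ℝ) [IsProbabilityMeasure ν]
    (hcont : ∀ x : ℝ, ν {x} = 0) (hpos : ν (Set.Iic (0 : ℝ)) = 0)
    (U : Fin (n1 + 1) → Ω → ℝ) (hmeas : ∀ i, Measurable (U i))
    (hindep : iIndepFun U μ)
    (hlaw : ∀ i, Measure.map (U i) μ = ν) :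
    μ {ω | (U (Fin.last n1) ω : EReal) ≤
        equantile (fun _ : Fin (n1 + n0 + 1) => 1 / ((n0 : ℝ) + n1 + 1))
          (fun j : Fin (n1 + n0 + 1) =>
            if hj : (j : ℕ) < n1 then ((U ⟨j, by omega⟩ ω : ℝ) : EReal)
            else if (j : ℕ) < n1 + n0 then ((0 : ℝ) : EReal) else (⊤ : EReal)) α}
      = ENNReal.ofReal
          (((⌈((n0 : ℝ) + n1 + 1) * α⌉ : ℤ) - (n0 : ℝ)) / ((n1 : ℝ) + 1)) ∧
    ((⌈((n0 : ℝ) + n1 + 1) * α⌉ : ℤ) - (n0 : ℝ)) / ((n1 : ℝ) + 1) ≤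
      1 / ((n1 : ℝ) + 1) +
        (((n0 : ℝ) + n1 + 1) / ((n1 : ℝ) + 1)) * (α - (n0 : ℝ) / ((n0 : ℝ) + n1 + 1)) := by
  refine ⟨?_, intCeil_sub_div_le n0 n1 α⟩
  set m := ⌈((n0 : ℝ) + n1 + 1) * α⌉₊
  obtain ⟨hn0m, hmN⟩ := natCeil_mul_mem_Ioc hα.2 hαlb
  set W : Ω → Fin (n1 + 1) → ℝ := fun ω i => U i ω
  have hW : μ.map W = Measure.pi fun _ => ν := by
    rw [hindep.map_fun_eq_pi_map fun i => (hmeas i).aemeasurable]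
    simp only [hlaw]
  have hWqmp : Measure.QuasiMeasurePreserving W μ (Measure.pi fun _ => ν) :=
    ⟨measurable_pi_lambda _ hmeas, hW.absolutelyContinuous⟩
  have hlast_pos : ∀ᵐ u ∂Measure.pi (fun _ : Fin (n1 + 1) => ν), 0 < u (Fin.last n1) :=
    ae_iff.mpr (measure_mono_null (fun u hu => not_lt.mp hu)
      (Measure.pi_eval_preimage_null (fun _ => ν) (i := Fin.last n1) hpos))
  have hevent : {u | (u (Fin.last n1) : EReal) ≤
      equantile (fun _ => 1 / ((n0 : ℝ) + n1 + 1)) (mixedScores n0 n1 u) α}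
      =ᵐ[Measure.pi fun _ => ν] {u | countBelow u (Fin.last n1) < m - n0} := by
    filter_upwards [hlast_pos] with u hu
    exact propext ((coe_le_equantile_mixedScores_iff n0 n1 u hu hα.1).trans
      Nat.lt_sub_iff_add_lt'.symm)
  have hceil : ((⌈((n0 : ℝ) + n1 + 1) * α⌉ : ℤ) : ℝ) - n0 = ((m - n0 : ℕ) : ℝ) := by
    rw [← natCast_ceil_eq_intCast_ceil (by nlinarith [hα.1]), Nat.cast_sub hn0m.le]
  calc μ _ = μ (W ⁻¹' {u | countBelow u (Fin.last n1) < m - n0}) :=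
        measure_congr (hWqmp.preimage_ae_eq hevent)
    _ = Measure.pi (fun _ => ν) {u | countBelow u (Fin.last n1) < m - n0} := by
        rw [← hW]
        exact (Measure.map_apply hWqmp.measurable (measurable_countBelow _ measurableSet_Iio)).symm
    _ = ((m - n0 : ℕ) : ℝ≥0∞) / (n1 + 1 : ℕ) := by
        rw [measure_countBelow_lt _ (measurePreserving_pi_comp_perm ν) (ae_injective_pi ν hcont)
          _ (by rw [Fintype.card_fin]; omega), Fintype.card_fin]
    _ = _ := by
        rw [hceil, ← Nat.cast_succ, ENNReal.ofReal_div_of_pos (by positivity),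
          ENNReal.ofReal_natCast, ENNReal.ofReal_natCast]
end
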